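/- arXiv:math/0602352 — 5 statements merged into one kernel-verified Lean document; each statement's English description precedes it below -/
import Mathlib

section
/- Let K be a field, r ∈ K[Γ] monic squarefree of degree d, b ∈ M_m(K[Γ]) with deg(b) ≤ d-1, and ℓ ≥ 1 an integer such that for every root γ of r, ℓ is not an eigenvalue of b(γ)/r'(γ). Then for any U ∈ K[Γ]^m there exist V, W ∈ K[Γ]^m with deg(V) < d, deg(W) ≤ max(max(2d-2, deg U) - d, 0), such that U/r^{ℓ+1} dΓ = ∇(V/r^ℓ) + (W/r^ℓ) dΓ, where ∇ = d/dΓ + b/r. -/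
/-!
Clearing denominators, the identity to solve is `U = M V + r V' + r W` with
`M = b - ℓ r' · 1`. At a root `γ` of `r` we have `M(γ) = -r'(γ) (ℓ - b(γ)/r'(γ))` with
`r'(γ) ≠ 0` by separability, so `det M` is coprime to `r`. Hence `M` is invertible modulo `r`
(through its adjugate), which gives `V` of degree `< d` with `M V ≡ U (mod r)`; then
`W = (U - M V - r V') / r` is a polynomial, and the degree bound on `W` follows from
`deg M ≤ d - 1` and `deg V ≤ d - 1`.
-/

open Polynomial Matrix

section Matrix

variable {n R : Type*} [Fintype n] [DecidableEq n]

theorem Matrix.exists_dvd_sub_mulVec_of_isCoprime_det [CommRing R] {M : Matrix n n R} {r : R}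
    (hM : IsCoprime M.det r) (U : n → R) : ∃ V : n → R, ∀ i, r ∣ U i - (M *ᵥ V) i := by
  obtain ⟨a, c, hac⟩ := hM
  refine ⟨M.adjugate *ᵥ (a • U), fun i => ⟨c * U i, ?_⟩⟩
  rw [Matrix.mulVec_mulVec, Matrix.mul_adjugate, Matrix.smul_mulVec, Matrix.one_mulVec]
  simp only [Pi.smul_apply, smul_eq_mul]
  linear_combination -U i * hac

theorem RingHom.map_det_sub_smul_one [CommRing R] {L : Type*} [Field L] (φ : R →+* L)
    (b : Matrix n n R) (c s : R) (hs : φ s ≠ 0) :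
    φ (b - (c * s) • 1).det
      = (-φ s) ^ Fintype.card n * (φ c • 1 - (φ s)⁻¹ • b.map φ).det := by
  rw [RingHom.map_det, ← Matrix.det_smul]
  congr 1
  ext i j
  simp only [RingHom.mapMatrix_apply, Matrix.map_apply, Matrix.sub_apply, Matrix.smul_apply,
    Matrix.one_apply, smul_eq_mul, map_sub, map_mul]
  split_ifs <;> simp only [map_one, map_zero] <;> field_simp <;> ring

end Matrix

namespace Polynomial

variable {R n : Type*}

theorem natDegree_le_pred_of_degree_lt [Semiring R] {p q : R[X]} (h : p.degree < q.degree) :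
    p.natDegree ≤ q.natDegree - 1 := by
  rcases eq_or_ne p 0 with rfl | hp
  · simp
  · have := natDegree_lt_natDegree hp h
    omega

theorem natDegree_mul_derivative_le [Semiring R] {p q : R[X]} {d : ℕ} (hp : p.natDegree ≤ d)
    (hq : q.natDegree ≤ d - 1) : (p * derivative q).natDegree ≤ 2 * d - 2 := by
  rcases eq_or_ne q.natDegree 0 with hq0 | hq0
  · simp [derivative_of_natDegree_zero hq0]
  · have := natDegree_derivative_le q
    exact natDegree_mul_le.trans (by omega)

theorem natDegree_mulVec_le [Semiring R] [Fintype n] {b : Matrix n n R[X]} {V : n → R[X]}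
    {p q : ℕ} (hb : ∀ i j, (b i j).natDegree ≤ p) (hV : ∀ j, (V j).natDegree ≤ q) (i : n) :
    ((b *ᵥ V) i).natDegree ≤ p + q :=
  natDegree_sum_le_of_forall_le _ _ fun j _ => natDegree_mul_le.trans (add_le_add (hb i j) (hV j))

theorem natDegree_sub_smul_one_le [Ring R] [DecidableEq n] {b : Matrix n n R[X]} {c : R[X]}
    {k : ℕ} (hb : ∀ i j, (b i j).natDegree ≤ k) (hc : c.natDegree ≤ k) (i j : n) :
    ((b - c • 1) i j).natDegree ≤ k := by
  simp only [Matrix.sub_apply, Matrix.smul_apply, Matrix.one_apply, smul_eq_mul]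
  split_ifs
  · simpa using natDegree_sub_le_of_le (hb i j) hc
  · simpa using hb i j

variable [Fintype n] [DecidableEq n]

theorem isCoprime_det_sub_smul_derivative {K L : Type*} [Field K] [Field L] [IsAlgClosed L]
    [Algebra K L] {r : K[X]} (hr : r.Separable) (b : Matrix n n K[X]) (c : K[X])
    (hroots : ∀ γ : L, aeval γ r = 0 →
      (aeval γ c • (1 : Matrix n n L)
        - (aeval γ (derivative r))⁻¹ • b.map (aeval γ)).det ≠ 0) :
    IsCoprime (b - (c * derivative r) • 1).det r := by
  rw [isCoprime_iff_aeval_ne_zero_of_isAlgClosed K L]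
  intro γ
  by_cases hγ : aeval γ r = 0
  · have hs := hr.aeval_derivative_ne_zero hγ
    left
    have hdet := RingHom.map_det_sub_smul_one (aeval γ).toRingHom b c _ hs
    change (aeval γ).toRingHom _ ≠ 0
    rw [hdet]
    exact mul_ne_zero (pow_ne_zero _ (neg_ne_zero.mpr hs)) (hroots γ hγ)
  · exact Or.inr hγ

theorem exists_degree_lt_dvd_sub_mulVec [CommRing R] [Nontrivial R] {M : Matrix n n R[X]}
    {r : R[X]} (hr : r.Monic) (hM : IsCoprime M.det r) (U : n → R[X]) :
    ∃ V : n → R[X], (∀ i, (V i).degree < r.degree) ∧ ∀ i, r ∣ U i - (M *ᵥ V) i := by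
  obtain ⟨V, hV⟩ := Matrix.exists_dvd_sub_mulVec_of_isCoprime_det hM U
  refine ⟨fun i => V i %ₘ r, fun i => degree_modByMonic_lt _ hr, fun i => ?_⟩
  have hsplit : V = (fun j => V j %ₘ r) + r • (fun j => V j /ₘ r) := by
    ext1 j
    exact (modByMonic_add_div (V j) r).symm
  have hMV := congrArg (fun v => (M *ᵥ v) i) hsplit
  simp only [Matrix.mulVec_add, Matrix.mulVec_smul, Pi.add_apply, Pi.smul_apply,
    smul_eq_mul] at hMV
  have : U i - (M *ᵥ fun i => V i %ₘ r) i
      = (U i - (M *ᵥ V) i) + r * (M *ᵥ fun i => V i /ₘ r) i := by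
    rw [hMV]; ring
  rw [this]
  exact (hV i).add (dvd_mul_right _ _)

end Polynomial

theorem stmt1_general {K : Type*} [Field K] [CharZero K] (m d : ℕ)
    (r : Polynomial K) (hmonic : r.Monic) (hsf : Squarefree r) (hdeg : r.natDegree = d)
    (b : Matrix (Fin m) (Fin m) (Polynomial K)) (hb : ∀ i j, (b i j).degree ≤ (d - 1 : ℕ))
    (ℓ : ℕ)
    (heig : ∀ γ : AlgebraicClosure K, aeval γ r = 0 →
      ((ℓ : AlgebraicClosure K) • (1 : Matrix (Fin m) (Fin m) (AlgebraicClosure K))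
        - (aeval γ (derivative r))⁻¹ • b.map (fun q => aeval γ q)).det ≠ 0)
    (U : Fin m → Polynomial K) :
    ∃ V W : Fin m → Polynomial K,
      (∀ i, (V i).degree < (d : WithBot ℕ)) ∧
      (∀ i, (W i).degree ≤
        ((max (max (2*d - 2) (Finset.univ.sup fun i => (U i).natDegree) - d) 0 : ℕ) : WithBot ℕ)) ∧
      (∀ i, U i = r * derivative (V i) - (ℓ : Polynomial K) * derivative r * V i
        + b.mulVec V i + r * W i) := by
  set M := b - ((ℓ : K[X]) * derivative r) • 1 with hM
  have hcop : IsCoprime M.det r := isCoprime_det_sub_smul_derivative (L := AlgebraicClosure K)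
    (PerfectField.separable_iff_squarefree.mpr hsf) b _ (by simpa using heig)
  obtain ⟨V, hVdeg, hdvd⟩ := exists_degree_lt_dvd_sub_mulVec hmonic hcop U
  choose W hW using fun i => (hdvd i).sub (dvd_mul_right r (derivative (V i)))
  have hVnat i : (V i).natDegree ≤ d - 1 := hdeg ▸ natDegree_le_pred_of_degree_lt (hVdeg i)
  have hMnat : ∀ i j, (M i j).natDegree ≤ d - 1 :=
    natDegree_sub_smul_one_le (fun i j => natDegree_le_iff_degree_le.mpr (hb i j))
      (natDegree_mul_le.trans (by simp [hdeg]))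
  refine ⟨V, W, fun i => ?_, fun i => ?_, fun i => ?_⟩
  · rw [← hdeg, ← degree_eq_natDegree hmonic.ne_zero]
    exact hVdeg i
  · have hF : (r * W i).natDegree
        ≤ max (max (U i).natDegree ((d - 1) + (d - 1))) (2 * d - 2) := by
      rw [← hW i]
      exact natDegree_sub_le_of_le
        (natDegree_sub_le_of_le le_rfl (natDegree_mulVec_le hMnat hVnat i))
        (natDegree_mul_derivative_le hdeg.le (hVnat i))
    have hU : (U i).natDegree ≤ Finset.univ.sup fun i => (U i).natDegree :=
      Finset.le_sup (f := fun i => (U i).natDegree) (Finset.mem_univ i)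
    rw [← mul_divByMonic_cancel_left (W i) hmonic]
    refine degree_le_of_natDegree_le ?_
    rw [natDegree_divByMonic _ hmonic, hdeg]
    omega
  · have hW' := hW i
    rw [hM, sub_mulVec, smul_mulVec, one_mulVec] at hW'
    simp only [Pi.sub_apply, Pi.smul_apply, smul_eq_mul] at hW'
    linear_combination hW'

/-- first reduction step (reduction of pole order at a finite pole).
`K` a field of characteristic 0, `r` monic squarefree of degree `d`, `b` an `m × m` matrix
of polynomials of degree `≤ d-1`, and `ℓ ≥ 1` such that for every root `γ` of `r` (in an
algebraic closure) `ℓ` is not an eigenvalue of `b(γ)/r'(γ)`. Then for any `U ∈ K[Γ]^m`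
there exist `V, W ∈ K[Γ]^m` with `deg V < d`, `deg W ≤ max(max(2d-2, deg U) - d, 0)` and
`U/r^{ℓ+1} dΓ = ∇(V/r^ℓ) + (W/r^ℓ) dΓ` where `∇ = d/dΓ + b/r`; after clearing the (nonzero)
denominator `r^{ℓ+1}` this identity reads `U = r·V' - ℓ·r'·V + b·V + r·W`. -/
theorem stmt1 {K : Type*} [Field K] [CharZero K] (m d : ℕ) (hd : 1 ≤ d)
    (r : Polynomial K) (hmonic : r.Monic) (hsf : Squarefree r) (hdeg : r.natDegree = d)
    (b : Matrix (Fin m) (Fin m) (Polynomial K)) (hb : ∀ i j, (b i j).degree ≤ (d - 1 : ℕ))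
    (ℓ : ℕ) (hℓ : 1 ≤ ℓ)
    (heig : ∀ γ : AlgebraicClosure K, aeval γ r = 0 →
      ((ℓ : AlgebraicClosure K) • (1 : Matrix (Fin m) (Fin m) (AlgebraicClosure K))
        - (aeval γ (derivative r))⁻¹ • b.map (fun q => aeval γ q)).det ≠ 0)
    (U : Fin m → Polynomial K) :
    ∃ V W : Fin m → Polynomial K,
      (∀ i, (V i).degree < (d : WithBot ℕ)) ∧
      (∀ i, (W i).degree ≤
        ((max (max (2*d - 2) (Finset.univ.sup fun i => (U i).natDegree) - d) 0 : ℕ) : WithBot ℕ)) ∧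
      (∀ i, U i = r * derivative (V i) - (ℓ : Polynomial K) * derivative r * V i
        + b.mulVec V i + r * W i) :=
  stmt1_general m d r hmonic hsf hdeg b hb ℓ heig U
end

section
/- Let K be a field of characteristic 0, r, b ∈ K[Γ] data of a connection ∇ = d/dΓ + b/r on A^m with A = K[Γ, 1/r], r monic squarefree of degree d, deg(b) ≤ d-1, and suppose ρ is a positive integer larger than every integer eigenvalue of b(γ)/r'(γ) for each root γ of r, and larger than every integer eigenvalue of -b_{d-1}. Then the cokernel of ∇: A^m → A^m dΓ is spanned over K by the images of the forms e_k·(Γ^i/r^j) dΓ (0 ≤ i < d, 1 ≤ j ≤ ρ, 1 ≤ k ≤ m) and e_k·Γ^j dΓ (0 ≤ j ≤ ρ-2, 1 ≤ k ≤ m). -/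
open Polynomial

/-- The derivative with respect to `Γ` of a rational function, computed via the
quotient rule on the reduced numerator and denominator. -/
noncomputable def ratDeriv {K : Type*} [Field K] (x : RatFunc K) : RatFunc K :=
  algebraMap (Polynomial K) (RatFunc K)
      (derivative x.num * x.denom - x.num * derivative x.denom) /
    algebraMap (Polynomial K) (RatFunc K) (x.denom ^ 2)

/-- Membership in `A = K[Γ, 1/r]`, viewed inside the field of rational functions. -/
def inA {K : Type*} [Field K] (r : Polynomial K) (x : RatFunc K) : Prop :=
  ∃ (f : Polynomial K) (n : ℕ),
    x = algebraMap (Polynomial K) (RatFunc K) f / (algebraMap (Polynomial K) (RatFunc K) r) ^ n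

/-- The connection `∇ = d/dΓ + b/r` acting on column vectors of rational functions. -/
noncomputable def nabla {K : Type*} [Field K] (m : ℕ) (r : Polynomial K)
    (b : Matrix (Fin m) (Fin m) (Polynomial K)) (v : Fin m → RatFunc K) : Fin m → RatFunc K :=
  fun i => ratDeriv (v i) +
    ((Matrix.of fun i j => algebraMap (Polynomial K) (RatFunc K) (b i j) /
        algebraMap (Polynomial K) (RatFunc K) r).mulVec v) i

/-!
Work in `W + ∇(Aᵐ)`, where `W` is the span of the standard forms; every element of `Aᵐ` is a
sum of vectors `f / rⁿ` with `f` polynomial. Since `∇(g / rⁿ) = (r g' - n r' g + b g) / rⁿ⁺¹`,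
the pole order is lowered by writing `f = q r + s` with `deg s < d`: for `n + 1 ≤ ρ` the term
`s / rⁿ⁺¹` is standard, and for `n ≥ ρ` the determinant of `b - n r'` is coprime to `r` (at a
root `γ` it is `(-r'(γ))ᵐ det(n - b(γ)/r'(γ))`), so `s ≡ (b - n r') g mod r` and `s / rⁿ⁺¹`
differs from `∇(g / rⁿ)` by a vector with pole order `n`. Polynomial vectors are handled in the
same way by degree: the numerator of `∇(w Γˢ⁺¹)` has coefficient `((s + 1) + b_{d-1}) w` in
degree `d + s`, and `(s + 1) + b_{d-1}` is invertible for `s + 1 ≥ ρ`; so the top coefficient of a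
polynomial vector of degree `s` is cancelled by some `∇(w Γˢ⁺¹)`, up to the remainder of its
numerator modulo `r`, which gives a standard form over `r`.
-/

section General

variable {R : Type*}

theorem Polynomial.coeff_divByMonic_of_natDegree_le [Ring R] [Nontrivial R] {p q : R[X]}
    (hq : q.Monic) {s : ℕ} (hp : p.natDegree ≤ q.natDegree + s) :
    (p /ₘ q).coeff s = p.coeff (q.natDegree + s) := by
  have hdiv : (p /ₘ q).natDegree ≤ s := by rw [natDegree_divByMonic p hq]; omega
  have hmod : (p %ₘ q).degree < ↑(q.natDegree + s) := by
    refine (degree_modByMonic_lt p hq).trans_le ?_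
    rw [degree_eq_natDegree hq.ne_zero]
    exact_mod_cast Nat.le_add_right _ _
  conv_rhs => rw [← modByMonic_add_div p q]
  rw [coeff_add, coeff_mul_add_eq_of_natDegree_le le_rfl hdiv, hq.coeff_natDegree, one_mul,
    coeff_eq_zero_of_degree_lt hmod, zero_add]

theorem Polynomial.degree_sub_lt_of_coeff_eq [Ring R] {p q : R[X]} {s : ℕ}
    (hp : p.degree < ↑(s + 1)) (hq : q.natDegree ≤ s) (h : p.coeff s = q.coeff s) :
    (p - q).degree < s := by
  rw [degree_lt_iff_coeff_zero] at hp ⊢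
  intro k hk
  rw [coeff_sub]
  rcases hk.eq_or_lt with rfl | hlt
  · exact sub_eq_zero.mpr h
  · rw [hp k hlt, coeff_eq_zero_of_natDegree_lt (hq.trans_lt hlt), sub_zero]

open Matrix in
theorem Matrix.exists_mulVec_eq_add_smul_of_isCoprime_det [CommRing R] {n : Type*} [Fintype n]
    [DecidableEq n] {M : Matrix n n R} {r : R} (h : IsCoprime M.det r) (s : n → R) :
    ∃ g t : n → R, M *ᵥ g = s + r • t := by
  obtain ⟨a, e, hae⟩ := h
  refine ⟨a • M.adjugate *ᵥ s, -(e • s), ?_⟩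
  ext i
  simp only [mulVec_smul, mulVec_mulVec, mul_adjugate, smul_mulVec, one_mulVec, Pi.smul_apply,
    Pi.add_apply, Pi.neg_apply, smul_eq_mul]
  linear_combination s i * hae

end General

namespace ConnectionCokernel

open Matrix

variable {K : Type*} [Field K]

local notation "φ" => algebraMap K[X] (RatFunc K)

theorem ratDeriv_div_algebraMap (P Q : K[X]) (hQ : Q ≠ 0) :
    ratDeriv (φ P / φ Q) = φ (derivative P * Q - P * derivative Q) / φ (Q ^ 2) := by
  set x := φ P / φ Q
  have hden := x.denom_ne_zero
  have e₁ : x.num * Q = P * x.denom := (RatFunc.num_mul_eq_mul_denom_iff hQ).mpr rfl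
  have e₂ := congrArg derivative e₁
  simp only [derivative_mul] at e₂
  rw [ratDeriv, div_eq_div_iff (RatFunc.algebraMap_ne_zero (pow_ne_zero 2 hden))
    (RatFunc.algebraMap_ne_zero (pow_ne_zero 2 hQ)), ← map_mul, ← map_mul]
  congr 1
  linear_combination Q * x.denom * e₂ - (derivative Q * x.denom + Q * derivative x.denom) * e₁

theorem ratDeriv_add (x y : RatFunc K) : ratDeriv (x + y) = ratDeriv x + ratDeriv y := by
  have hx := x.denom_ne_zero
  have hy := y.denom_ne_zero
  have hsum : x + y = φ (x.num * y.denom + x.denom * y.num) / φ (x.denom * y.denom) := by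
    conv_lhs => rw [← x.num_div_denom, ← y.num_div_denom]
    rw [div_add_div _ _ (RatFunc.algebraMap_ne_zero hx) (RatFunc.algebraMap_ne_zero hy)]
    simp only [map_add, map_mul]
  rw [hsum, ratDeriv_div_algebraMap _ _ (mul_ne_zero hx hy), ratDeriv, ratDeriv]
  have hφx := RatFunc.algebraMap_ne_zero hx
  have hφy := RatFunc.algebraMap_ne_zero hy
  simp only [map_mul, map_sub, map_add, map_pow, derivative_mul]
  field_simp
  ring

theorem ratDeriv_smul (c : K) (x : RatFunc K) : ratDeriv (c • x) = c • ratDeriv x := by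
  have hx := x.denom_ne_zero
  have hcx : c • x = φ (C c * x.num) / φ x.denom := by
    rw [map_mul, mul_div_assoc, x.num_div_denom, RatFunc.algebraMap_C, RatFunc.smul_eq_C_mul]
  rw [hcx, ratDeriv_div_algebraMap _ _ hx, ratDeriv, RatFunc.smul_eq_C_mul, ← RatFunc.algebraMap_C,
    ← mul_div_assoc, ← map_mul]
  congr 2
  simp only [derivative_mul, derivative_C, zero_mul, zero_add]
  ring

noncomputable def nablaₗ (m : ℕ) (r : K[X]) (b : Matrix (Fin m) (Fin m) K[X]) :
    (Fin m → RatFunc K) →ₗ[K] (Fin m → RatFunc K) where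
  toFun := nabla m r b
  map_add' v w := by
    ext i
    simp only [nabla, Pi.add_apply, ratDeriv_add, Matrix.mulVec_add]
    ring
  map_smul' c v := by
    ext i
    simp only [nabla, Pi.smul_apply, ratDeriv_smul, Matrix.mulVec_smul, smul_add, RingHom.id_apply]

-- `A = K[Γ, 1/r]`, as a `K`-subspace of `RatFunc K`.
noncomputable def spanDivPow (r : K[X]) : Submodule K (RatFunc K) :=
  Submodule.span K {x | inA r x}

theorem inA_of_mem_spanDivPow {r : K[X]} (hr : r ≠ 0) {x : RatFunc K}
    (hx : x ∈ spanDivPow r) : inA r x := by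
  have hφr : φ r ≠ 0 := RatFunc.algebraMap_ne_zero hr
  induction hx using Submodule.span_induction with
  | mem _ hx => exact hx
  | zero => exact ⟨0, 0, by simp⟩
  | add x y _ _ hx hy =>
    obtain ⟨f, n, rfl⟩ := hx
    obtain ⟨g, p, rfl⟩ := hy
    refine ⟨f * r ^ p + g * r ^ n, n + p, ?_⟩
    field_simp
    simp only [map_add, map_mul, map_pow]
    ring
  | smul c x _ hx =>
    obtain ⟨f, n, rfl⟩ := hx
    refine ⟨C c * f, n, ?_⟩
    rw [RatFunc.smul_eq_C_mul, map_mul, RatFunc.algebraMap_C, mul_div_assoc]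

variable {m : ℕ}

noncomputable def fracVec (r : K[X]) (f : Fin m → K[X]) (n : ℕ) : Fin m → RatFunc K :=
  fun i => φ (f i) / φ r ^ n

theorem fracVec_mem_pi_spanDivPow (r : K[X]) (f : Fin m → K[X]) (n : ℕ) :
    fracVec r f n ∈ Submodule.pi Set.univ fun _ => spanDivPow r :=
  fun i _ => Submodule.subset_span ⟨f i, n, rfl⟩

theorem fracVec_sub (r : K[X]) (f g : Fin m → K[X]) (n : ℕ) :
    fracVec r (f - g) n = fracVec r f n - fracVec r g n := by
  ext i
  simp only [fracVec, Pi.sub_apply, map_sub, sub_div]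

theorem fracVec_single (r : K[X]) (k : Fin m) (f : K[X]) (n : ℕ) :
    fracVec r (Pi.single k f) n = Pi.single k (φ f / φ r ^ n) := by
  ext i
  exact Pi.apply_single (fun _ f => φ f / φ r ^ n) (fun _ => by simp) k f i

theorem fracVec_smul_add {r : K[X]} (hr : r ≠ 0) (F S : Fin m → K[X]) (n : ℕ) :
    fracVec r (r • F + S) (n + 1) = fracVec r F n + fracVec r S (n + 1) := by
  have hφr : φ r ≠ 0 := RatFunc.algebraMap_ne_zero hr
  ext i
  simp only [fracVec, Pi.add_apply, Pi.smul_apply, smul_eq_mul, map_add, map_mul, add_div,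
    pow_succ]
  field_simp

theorem fracVec_eq_divByMonic_add_modByMonic {r : K[X]} (hr : r.Monic) (f : Fin m → K[X])
    (n : ℕ) : fracVec r f (n + 1) =
      fracVec r (fun i => f i /ₘ r) n + fracVec r (fun i => f i %ₘ r) (n + 1) := by
  rw [← fracVec_smul_add hr.ne_zero]
  congr 1
  funext i
  exact (modByMonic_add_div (f i) r).symm.trans (add_comm _ _)

theorem nabla_fracVec {r : K[X]} (hr : r ≠ 0) (b : Matrix (Fin m) (Fin m) K[X])
    (f : Fin m → K[X]) (n : ℕ) :
    nabla m r b (fracVec r f n) = fracVec r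
      (r • (derivative ∘ f) - (C (n : K) * derivative r) • f + b *ᵥ f) (n + 1) := by
  have hφr : φ r ≠ 0 := RatFunc.algebraMap_ne_zero hr
  ext i
  simp only [nabla, fracVec]
  rw [← map_pow, ratDeriv_div_algebraMap _ _ (pow_ne_zero n hr)]
  simp only [mulVec, dotProduct, of_apply, Pi.add_apply, Pi.sub_apply, Pi.smul_apply,
    smul_eq_mul, Function.comp_apply, map_add, map_sub, map_mul, map_sum, map_pow,
    derivative_pow, map_natCast, fracVec]
  have hsum : ∑ j, φ (b i j) / φ r * (φ (f j) / φ r ^ n) =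
      (∑ j, φ (b i j) * φ (f j)) / φ r ^ (n + 1) := by
    rw [Finset.sum_div]
    refine Finset.sum_congr rfl fun j _ => ?_
    rw [div_mul_div_comm, pow_succ']
  rw [hsum]
  rcases n with _ | n
  · simp only [pow_zero, Nat.cast_zero, zero_mul, mul_zero, sub_zero, zero_add, pow_one]
    field_simp
  · simp only [Nat.add_sub_cancel]
    field_simp
    ring

theorem fracVec_mem_of_degree_lt {V : Submodule K (Fin m → RatFunc K)} {r : K[X]} {N n : ℕ}
    (hV : ∀ (k : Fin m) (i : ℕ), i < N → Pi.single k (φ (X ^ i) / φ r ^ n) ∈ V)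
    {f : Fin m → K[X]} (hf : ∀ i, (f i).degree < N) : fracVec r f n ∈ V := by
  classical
  rw [← Finset.univ_sum_single (fracVec r f n)]
  refine Submodule.sum_mem _ fun k _ => ?_
  have hsupp : ∀ i ∈ (f k).support, i < N := fun i hi =>
    Nat.cast_lt.mp ((le_degree_of_ne_zero (mem_support_iff.mp hi)).trans_lt (hf k))
  have hfk : fracVec r f n k = ∑ i ∈ (f k).support, (f k).coeff i • (φ (X ^ i) / φ r ^ n) := by
    conv_lhs => rw [fracVec, as_sum_support_C_mul_X_pow (f k)]
    simp only [map_sum, Finset.sum_div, map_mul, RatFunc.algebraMap_C, ← RatFunc.smul_eq_C_mul,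
      smul_div_assoc]
  change fracVec r f n k ∈ V.comap (LinearMap.single K (fun _ => RatFunc K) k)
  rw [hfk]
  exact Submodule.sum_mem _ fun i hi => Submodule.smul_mem _ _ (hV k i (hsupp i hi))

def IntEigenvaluesOfResiduesLT (ρ : ℕ) (r : K[X]) (b : Matrix (Fin m) (Fin m) K[X]) : Prop :=
  ∀ (n : ℤ) (γ : AlgebraicClosure K), aeval γ r = 0 →
    ((n : AlgebraicClosure K) • (1 : Matrix (Fin m) (Fin m) (AlgebraicClosure K))
      - (aeval γ (derivative r))⁻¹ • b.map (fun q => aeval γ q)).det = 0 → n < (ρ : ℤ)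

-- The residue of `b / r dΓ` at infinity is `-b_{d-1}`.
def IntEigenvaluesOfResidueAtInftyLT (d ρ : ℕ) (b : Matrix (Fin m) (Fin m) K[X]) : Prop :=
  ∀ n : ℤ, ((n : AlgebraicClosure K) • (1 : Matrix (Fin m) (Fin m) (AlgebraicClosure K))
    + b.map (fun q => algebraMap K (AlgebraicClosure K) (q.coeff (d - 1)))).det = 0 → n < (ρ : ℤ)

theorem isCoprime_det_sub_smul_derivative [CharZero K] {ρ n : ℕ} {r : K[X]} (hsf : Squarefree r)
    {b : Matrix (Fin m) (Fin m) K[X]} (hfin : IntEigenvaluesOfResiduesLT ρ r b) (hn : ρ ≤ n) :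
    IsCoprime (b - (C (n : K) * derivative r) • (1 : Matrix (Fin m) (Fin m) K[X])).det r := by
  rw [isCoprime_iff_aeval_ne_zero_of_isAlgClosed K (AlgebraicClosure K)]
  intro γ
  by_contra! h
  obtain ⟨hdet, hγ⟩ := h
  have hc : aeval γ (derivative r) ≠ 0 :=
    (PerfectField.separable_iff_squarefree.mpr hsf).aeval_derivative_ne_zero hγ
  refine absurd (hfin n γ hγ ?_) (by omega)
  have hres : ((n : ℤ) : AlgebraicClosure K) • (1 : Matrix (Fin m) (Fin m) _)
      - (aeval γ (derivative r))⁻¹ • b.map (fun q => aeval γ q) =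
      (-(aeval γ (derivative r))⁻¹) •
        (aeval γ).mapMatrix (b - (C (n : K) * derivative r) • 1) := by
    ext i j
    rcases eq_or_ne i j with rfl | hij
    · simp only [Int.cast_natCast, Matrix.sub_apply, Matrix.smul_apply, one_apply_eq, smul_eq_mul,
        mul_one, map_apply, AlgHom.mapMatrix_apply, map_sub, map_mul, map_natCast, neg_mul]
      field_simp
      ring
    · simp [Matrix.one_apply_ne hij]
  rw [hres, det_smul, ← AlgHom.map_det, hdet, mul_zero]

theorem det_natCast_smul_add_ne_zero {d ρ s : ℕ} {b : Matrix (Fin m) (Fin m) K[X]}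
    (hinf : IntEigenvaluesOfResidueAtInftyLT d ρ b) (hs : ρ ≤ s) :
    ((s : K) • (1 : Matrix (Fin m) (Fin m) K) + b.map (fun q => q.coeff (d - 1))).det ≠ 0 := by
  intro h
  refine absurd (hinf s ?_) (by omega)
  have hmap : ((s : ℤ) : AlgebraicClosure K) • (1 : Matrix (Fin m) (Fin m) _)
      + b.map (fun q => algebraMap K (AlgebraicClosure K) (q.coeff (d - 1))) =
      (algebraMap K (AlgebraicClosure K)).mapMatrix
        ((s : K) • 1 + b.map (fun q => q.coeff (d - 1))) := by
    ext i j
    rcases eq_or_ne i j with rfl | hij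
    · simp
    · simp [Matrix.one_apply_ne hij]
  rw [hmap, ← RingHom.map_det, h, map_zero]

section LeadingTerm

variable {d : ℕ} {r : K[X]} {b : Matrix (Fin m) (Fin m) K[X]}

theorem natDegree_add_mulVec_monomial_le (hd : 1 ≤ d) (hdeg : r.natDegree = d)
    (hb : ∀ i j, (b i j).degree ≤ (d - 1 : ℕ)) (s : ℕ) (w : Fin m → K) (i : Fin m) :
    ((r • (derivative ∘ fun j => monomial (s + 1) (w j)) +
      b *ᵥ fun j => monomial (s + 1) (w j)) i).natDegree ≤ d + s := by
  simp only [Pi.add_apply, Pi.smul_apply, Function.comp_apply, smul_eq_mul, mulVec, dotProduct,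
    derivative_monomial, Nat.add_sub_cancel]
  refine natDegree_add_le_of_degree_le ?_ (natDegree_sum_le_of_forall_le _ _ fun j _ => ?_)
  · exact natDegree_mul_le_of_le hdeg.le (natDegree_monomial_le _)
  · have := natDegree_mul_le_of_le (natDegree_le_iff_degree_le.mpr (hb i j))
      (natDegree_monomial_le (w j) (m := s + 1))
    omega

theorem coeff_add_mulVec_monomial (hd : 1 ≤ d) (hmonic : r.Monic) (hdeg : r.natDegree = d)
    (s : ℕ) (w : Fin m → K) :
    (fun i => ((r • (derivative ∘ fun j => monomial (s + 1) (w j)) +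
      b *ᵥ fun j => monomial (s + 1) (w j)) i).coeff (d + s)) =
      (((s + 1 : ℕ) : K) • 1 + b.map (fun q => q.coeff (d - 1))) *ᵥ w := by
  have hds : d + s = (d - 1) + (s + 1) := by omega
  ext i
  rw [add_mulVec, smul_mulVec, one_mulVec]
  simp only [Pi.add_apply, Pi.smul_apply, Function.comp_apply, smul_eq_mul, mulVec, dotProduct,
    coeff_add, finsetSum_coeff, derivative_monomial, Nat.add_sub_cancel, coeff_mul_monomial,
    map_apply]
  rw [← hdeg, hmonic.coeff_natDegree, one_mul, mul_comm]
  congr 1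
  refine Finset.sum_congr rfl fun j _ => ?_
  rw [hdeg, hds, coeff_mul_monomial]

end LeadingTerm

def standardForms (d ρ : ℕ) (r : K[X]) : Set (Fin m → RatFunc K) :=
  {w | (∃ (k : Fin m) (i j : ℕ), i < d ∧ 1 ≤ j ∧ j ≤ ρ ∧ w = Pi.single k (φ (X ^ i) / φ r ^ j)) ∨
    (∃ (k : Fin m) (j : ℕ), j + 2 ≤ ρ ∧ w = Pi.single k (φ (X ^ j)))}

noncomputable def exactPlusStandard (d ρ : ℕ) (r : K[X]) (b : Matrix (Fin m) (Fin m) K[X]) :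
    Submodule K (Fin m → RatFunc K) :=
  Submodule.span K (standardForms d ρ r) ⊔
    (Submodule.pi Set.univ fun _ => spanDivPow r).map (nablaₗ m r b)

section Reduction

variable {d ρ : ℕ} {r : K[X]} {b : Matrix (Fin m) (Fin m) K[X]}

theorem nabla_fracVec_mem_exactPlusStandard (f : Fin m → K[X]) (n : ℕ) :
    nabla m r b (fracVec r f n) ∈ exactPlusStandard d ρ r b :=
  Submodule.mem_sup_right (Submodule.mem_map_of_mem (fracVec_mem_pi_spanDivPow r f n))

theorem fracVec_modByMonic_mem_span (hmonic : r.Monic) (hdeg : r.natDegree = d)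
    {j : ℕ} (hj₁ : 1 ≤ j) (hj : j ≤ ρ) (f : Fin m → K[X]) :
    fracVec r (fun i => f i %ₘ r) j ∈ Submodule.span K (standardForms d ρ r) := by
  refine fracVec_mem_of_degree_lt (N := d) (fun k i hi => Submodule.subset_span
    (Or.inl ⟨k, i, j, hi, hj₁, hj, rfl⟩)) fun i => ?_
  rw [← hdeg, ← degree_eq_natDegree hmonic.ne_zero]
  exact degree_modByMonic_lt _ hmonic

theorem fracVec_zero_mem_span {f : Fin m → K[X]} (hf : ∀ i, (f i).degree < (ρ - 1 : ℕ)) :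
    fracVec r f 0 ∈ Submodule.span K (standardForms d ρ r) :=
  fracVec_mem_of_degree_lt (fun k i hi => Submodule.subset_span
    (Or.inr ⟨k, i, by omega, by rw [pow_zero, div_one]⟩)) hf

theorem fracVec_zero_mem_of_degree_lt_succ (hd : 1 ≤ d) (hρ : 1 ≤ ρ) (hmonic : r.Monic)
    (hdeg : r.natDegree = d) (hb : ∀ i j, (b i j).degree ≤ (d - 1 : ℕ))
    (hinf : IntEigenvaluesOfResidueAtInftyLT d ρ b) {s : ℕ} (hs : ρ ≤ s + 1)
    (ih : ∀ G : Fin m → K[X], (∀ i, (G i).degree < s) → fracVec r G 0 ∈ exactPlusStandard d ρ r b)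
    {G : Fin m → K[X]} (hG : ∀ i, (G i).degree < ↑(s + 1)) :
    fracVec r G 0 ∈ exactPlusStandard d ρ r b := by
  classical
  obtain ⟨w, hw⟩ := mulVec_surjective_iff_isUnit.mpr ((isUnit_iff_isUnit_det _).mpr
    (det_natCast_smul_add_ne_zero hinf hs).isUnit) fun i => (G i).coeff s
  set P : Fin m → K[X] := fun j => monomial (s + 1) (w j)
  set H := r • (derivative ∘ P) + b *ᵥ P
  set Q : Fin m → K[X] := fun i => H i /ₘ r
  have hnabla : nabla m r b (fracVec r P 0) = fracVec r H 1 := by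
    rw [nabla_fracVec hmonic.ne_zero]
    simp [H]
  have hHdeg : ∀ i, (H i).natDegree ≤ r.natDegree + s := fun i =>
    hdeg ▸ natDegree_add_mulVec_monomial_le hd hdeg hb s w i
  have hHcoeff : ∀ i, (H i).coeff (r.natDegree + s) = (G i).coeff s := fun i =>
    hdeg ▸ (congrFun (coeff_add_mulVec_monomial hd hmonic hdeg s w) i).trans (congrFun hw i)
  have hQ : ∀ i, (Q i).natDegree ≤ s := fun i => by
    rw [natDegree_divByMonic _ hmonic]
    have := hHdeg i
    omega
  have hQs : ∀ i, (Q i).coeff s = (G i).coeff s := fun i =>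
    (coeff_divByMonic_of_natDegree_le hmonic (hHdeg i)).trans (hHcoeff i)
  have hlower : fracVec r (G - Q) 0 ∈ exactPlusStandard d ρ r b :=
    ih _ fun i => degree_sub_lt_of_coeff_eq (hG i) (hQ i) (hQs i).symm
  have hrem := fracVec_modByMonic_mem_span hmonic hdeg le_rfl hρ H
  have hsplit : fracVec r G 0 = fracVec r (G - Q) 0 + nabla m r b (fracVec r P 0) -
      fracVec r (fun i => H i %ₘ r) 1 := by
    rw [fracVec_sub, hnabla, fracVec_eq_divByMonic_add_modByMonic hmonic]
    abel
  rw [hsplit]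
  exact sub_mem (add_mem hlower (nabla_fracVec_mem_exactPlusStandard P 0))
    (Submodule.mem_sup_left hrem)

theorem fracVec_zero_mem_exactPlusStandard (hd : 1 ≤ d) (hρ : 1 ≤ ρ) (hmonic : r.Monic)
    (hdeg : r.natDegree = d) (hb : ∀ i j, (b i j).degree ≤ (d - 1 : ℕ))
    (hinf : IntEigenvaluesOfResidueAtInftyLT d ρ b) (G : Fin m → K[X]) :
    fracVec r G 0 ∈ exactPlusStandard d ρ r b := by
  have key : ∀ N, ρ - 1 ≤ N → ∀ G : Fin m → K[X], (∀ i, (G i).degree < N) →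
      fracVec r G 0 ∈ exactPlusStandard d ρ r b := by
    intro N hN
    induction N, hN using Nat.le_induction with
    | base => exact fun G hG => Submodule.mem_sup_left (fracVec_zero_mem_span hG)
    | succ s hs ih => exact fun G hG =>
        fracVec_zero_mem_of_degree_lt_succ hd hρ hmonic hdeg hb hinf (by omega) ih hG
  refine key (ρ - 1 + Finset.univ.sup fun i => (G i).natDegree + 1) (Nat.le_add_right _ _) G
    fun i => degree_le_natDegree.trans_lt (Nat.cast_lt.mpr ?_)
  have := Finset.le_sup (f := fun i => (G i).natDegree + 1) (Finset.mem_univ i)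
  omega

theorem fracVec_mem_exactPlusStandard [CharZero K] (hmonic : r.Monic) (hsf : Squarefree r)
    (hdeg : r.natDegree = d) (hfin : IntEigenvaluesOfResiduesLT ρ r b)
    (hpoly : ∀ G : Fin m → K[X], fracVec r G 0 ∈ exactPlusStandard d ρ r b) (n : ℕ)
    (f : Fin m → K[X]) : fracVec r f n ∈ exactPlusStandard d ρ r b := by
  induction n generalizing f with
  | zero => exact hpoly f
  | succ n ih =>
    rw [fracVec_eq_divByMonic_add_modByMonic hmonic]
    refine add_mem (ih _) ?_
    rcases le_or_gt (n + 1) ρ with hn | hn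
    · exact Submodule.mem_sup_left (fracVec_modByMonic_mem_span hmonic hdeg (by omega) hn f)
    obtain ⟨g, t, hgt⟩ := exists_mulVec_eq_add_smul_of_isCoprime_det
      (isCoprime_det_sub_smul_derivative hsf hfin (by omega : ρ ≤ n)) fun i => f i %ₘ r
    rw [sub_mulVec, smul_mulVec, one_mulVec] at hgt
    have hsplit : fracVec r (fun i => f i %ₘ r) (n + 1) =
        nabla m r b (fracVec r g n) - fracVec r (derivative ∘ g + t) n := by
      rw [eq_sub_iff_add_eq, add_comm, ← fracVec_smul_add hmonic.ne_zero,
        nabla_fracVec hmonic.ne_zero]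
      congr 1
      linear_combination (norm := module) -hgt
    rw [hsplit]
    exact sub_mem (nabla_fracVec_mem_exactPlusStandard g n) (ih _)

end Reduction

theorem mem_of_forall_inA {V : Submodule K (Fin m → RatFunc K)} {r : K[X]}
    (hV : ∀ n f, fracVec r f n ∈ V) {u : Fin m → RatFunc K} (hu : ∀ i, inA r (u i)) : u ∈ V := by
  classical
  rw [← Finset.univ_sum_single u]
  refine Submodule.sum_mem _ fun k _ => ?_
  obtain ⟨f, n, hf⟩ := hu k
  rw [hf, ← fracVec_single]
  exact hV n _

end ConnectionCokernel

open ConnectionCokernel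

/-- Theorem `Thm-FGEdR`: with `∇ = d/dΓ + b/r` on `A^m`, `A = K[Γ,1/r]`,
`r` monic squarefree of degree `d`, `deg b ≤ d-1`, and `ρ` a positive integer greater than
every integer eigenvalue of `b(γ)/r'(γ)` at each root `γ` of `r` and greater than every
integer eigenvalue of `-b_{d-1}`, the cokernel of `∇ : A^m → A^m dΓ` is spanned over `K`
by the images of the forms `e_k·(Γ^i/r^j) dΓ` (`0 ≤ i < d`, `1 ≤ j ≤ ρ`) and
`e_k·Γ^j dΓ` (`0 ≤ j ≤ ρ-2`). -/
theorem stmt3 {K : Type*} [Field K] [CharZero K] (m d ρ : ℕ) (hd : 1 ≤ d) (hρ : 1 ≤ ρ)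
    (r : Polynomial K) (hmonic : r.Monic) (hsf : Squarefree r) (hdeg : r.natDegree = d)
    (b : Matrix (Fin m) (Fin m) (Polynomial K)) (hb : ∀ i j, (b i j).degree ≤ (d - 1 : ℕ))
    (hfin : ∀ (n : ℤ) (γ : AlgebraicClosure K), aeval γ r = 0 →
      ((n : AlgebraicClosure K) • (1 : Matrix (Fin m) (Fin m) (AlgebraicClosure K))
        - (aeval γ (derivative r))⁻¹ • b.map (fun q => aeval γ q)).det = 0 → n < (ρ : ℤ))
    (hinf : ∀ n : ℤ,
      ((n : AlgebraicClosure K) • (1 : Matrix (Fin m) (Fin m) (AlgebraicClosure K))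
        + b.map (fun q => algebraMap K (AlgebraicClosure K) (q.coeff (d - 1)))).det = 0 →
      n < (ρ : ℤ)) :
    ∀ u : Fin m → RatFunc K, (∀ i, inA r (u i)) →
      ∃ v : Fin m → RatFunc K, (∀ i, inA r (v i)) ∧
        u - nabla m r b v ∈ Submodule.span K
          {w : Fin m → RatFunc K |
            (∃ (k : Fin m) (i j : ℕ), i < d ∧ 1 ≤ j ∧ j ≤ ρ ∧
              w = Pi.single k (algebraMap (Polynomial K) (RatFunc K) (X ^ i) /
                (algebraMap (Polynomial K) (RatFunc K) r) ^ j)) ∨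
            (∃ (k : Fin m) (j : ℕ), j + 2 ≤ ρ ∧
              w = Pi.single k (algebraMap (Polynomial K) (RatFunc K) (X ^ j)))} := by
  intro u hu
  have hpoly := fracVec_zero_mem_exactPlusStandard hd hρ hmonic hdeg hb hinf
  have hu' : u ∈ exactPlusStandard d ρ r b :=
    mem_of_forall_inA (fracVec_mem_exactPlusStandard hmonic hsf hdeg hfin hpoly) hu
  obtain ⟨w, hw, _, ⟨v, hv, rfl⟩, rfl⟩ := Submodule.mem_sup.mp hu'
  exact ⟨v, fun i => inA_of_mem_spanDivPow hmonic.ne_zero (hv i trivial),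
    (add_sub_cancel_right w (nabla m r b v)).symm ▸ hw⟩
end

section
/- Under the hypotheses of the preceding reduction theorem (∇ = d/dΓ + b/r with r monic squarefree of degree d, deg(b) ≤ d-1, and ρ exceeding all relevant integer exponents), the cokernel E := coker(∇ : A^m → A^m dΓ) with A = K[Γ, 1/r] is a finite-dimensional K-vector space. -/
open Polynomial

/-!
Write the elements of `A^m` as `g / r^n` with `g` a vector of polynomials. Then
`∇(g / r^n) = Φₙ(g) / r^(n+1)` with `Φₙ(g) = r g' + (b - n r') g`.

Poles: at a root `γ` of `r` the matrix `b - n r'` equals `-r'(γ) (n - b(γ)/r'(γ))`, which is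
invertible for `n ≥ ρ`; so `det (b - n r')` is coprime to `r` and every `f` is `Φₙ(g) + r h`.
Hence `f / r^(n+1) ≡ h / r^n` modulo the image of `∇`, and the pole order drops to `ρ`.

Degrees: if `deg g ≤ e`, the coefficient of `Φ_{ρ-1}(g)` in degree `e + d - 1` is
`(e - (ρ-1) d) I + b_{d-1}` applied to the top coefficient of `g`. For large `e` the integer
`e - (ρ-1) d` is not a local exponent at infinity, so this matrix is invertible and the top
coefficient of a numerator over `r^ρ` can be cancelled. What remains is `h / r^ρ` with `deg h`
bounded, a finite-dimensional space.
-/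

open Matrix

section Fractions

variable {K ι : Type*} [Field K]

noncomputable def fracVec (r : K[X]) (n : ℕ) : (ι → K[X]) →ₗ[K] (ι → RatFunc K) where
  toFun g i := algebraMap K[X] (RatFunc K) (g i) / algebraMap K[X] (RatFunc K) r ^ n
  map_add' g g' := by ext i; simp [add_div]
  map_smul' c g := by ext i; simp [Algebra.smul_def, mul_div_assoc]

lemma fracVec_apply (r : K[X]) (n : ℕ) (g : ι → K[X]) (i : ι) :
    fracVec r n g i = algebraMap K[X] (RatFunc K) (g i) / algebraMap K[X] (RatFunc K) r ^ n :=
  rfl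

lemma fracVec_add_pow_smul {r : K[X]} (hr : r ≠ 0) (n j : ℕ) (g : ι → K[X]) :
    fracVec r (n + j) (r ^ j • g) = fracVec r n g := by
  have hr' : algebraMap K[X] (RatFunc K) r ≠ 0 := by simpa using hr
  ext i
  simp only [fracVec_apply, Pi.smul_apply, smul_eq_mul, map_mul, map_pow, pow_add]
  rw [mul_comm (_ ^ n), mul_div_mul_left _ _ (pow_ne_zero _ hr')]

lemma exists_fracVec_eq [Fintype ι] {r : K[X]} (hr : r ≠ 0) {u : ι → RatFunc K}
    (hu : ∀ i, inA r (u i)) : ∃ n f, fracVec r n f = u := by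
  choose F k hk using hu
  have hr' : algebraMap K[X] (RatFunc K) r ≠ 0 := by simpa using hr
  refine ⟨Finset.univ.sup k, fun i => r ^ (Finset.univ.sup k - k i) * F i, funext fun i => ?_⟩
  rw [fracVec_apply, hk, ← Nat.add_sub_cancel' (Finset.le_sup (Finset.mem_univ i)), pow_add,
    Nat.add_sub_cancel_left, map_mul, map_pow, mul_comm (_ ^ k i),
    mul_div_mul_left _ _ (pow_ne_zero _ hr')]

lemma fracVec_mem_span_single_X_pow [Fintype ι] [DecidableEq ι] (r : K[X]) (n N : ℕ)
    {h : ι → K[X]} (hh : ∀ i, (h i).natDegree < N) :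
    fracVec r n h ∈ Submodule.span K
      ((fun p : ℕ × ι => fracVec r n (Pi.single p.2 (X ^ p.1))) ''
        ↑(Finset.range N ×ˢ (Finset.univ : Finset ι))) := by
  have hsum : h = ∑ p ∈ Finset.range N ×ˢ Finset.univ,
      (h p.2).coeff p.1 • Pi.single p.2 (X ^ p.1) := by
    conv_lhs => rw [← Finset.univ_sum_single h]
    rw [Finset.sum_product_right]
    refine Finset.sum_congr rfl fun i _ => ?_
    simp_rw [← Pi.single_smul, ← LinearMap.single_apply K (fun _ : ι => K[X]), ← map_sum,
      smul_X_eq_monomial, ← as_sum_range' _ _ (hh i)]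
  rw [hsum, map_sum]
  refine Submodule.sum_mem _ fun p hp => ?_
  rw [map_smul]
  exact Submodule.smul_mem _ _ (Submodule.subset_span (Set.mem_image_of_mem _ hp))

end Fractions

section Connection

variable {K : Type*} [Field K] {m : ℕ}

noncomputable def nablaNumerator (r : K[X]) (b : Matrix (Fin m) (Fin m) K[X]) (n : ℕ) :
    (Fin m → K[X]) →ₗ[K] (Fin m → K[X]) where
  toFun g := r • (fun i => derivative (g i)) + (b - (n * derivative r) • 1) *ᵥ g
  map_add' g g' := by
    funext i
    simp only [Pi.add_apply, derivative_add, mulVec_add, Pi.smul_apply, smul_eq_mul, mul_add]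
    ring
  map_smul' c g := by funext i; simp [mulVec_smul]

lemma nablaNumerator_apply (r : K[X]) (b : Matrix (Fin m) (Fin m) K[X]) (n : ℕ)
    (g : Fin m → K[X]) (i : Fin m) :
    nablaNumerator r b n g i =
      derivative (g i) * r - n * derivative r * g i + ∑ j, b i j * g j := by
  simp only [nablaNumerator, sub_mulVec, smul_mulVec, one_mulVec, LinearMap.coe_mk,
    AddHom.coe_mk, Pi.add_apply, Pi.smul_apply, smul_eq_mul, Pi.sub_apply, mulVec, dotProduct]
  ring

lemma ratDeriv_algebraMap_div (p q : K[X]) (hq : q ≠ 0) :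
    ratDeriv (algebraMap K[X] (RatFunc K) p / algebraMap K[X] (RatFunc K) q) =
      algebraMap K[X] (RatFunc K) (derivative p * q - p * derivative q) /
        algebraMap K[X] (RatFunc K) (q ^ 2) := by
  set x := algebraMap K[X] (RatFunc K) p / algebraMap K[X] (RatFunc K) q
  have hx : x.num * q = p * x.denom := by
    apply RatFunc.algebraMap_injective K
    have hq' : algebraMap K[X] (RatFunc K) q ≠ 0 := by simpa using hq
    have hd' : algebraMap K[X] (RatFunc K) x.denom ≠ 0 := by simpa using x.denom_ne_zero
    have h := x.num_div_denom
    rw [div_eq_div_iff hd' hq'] at h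
    simpa using h
  have hx' := congrArg derivative hx
  simp only [derivative_mul] at hx'
  rw [ratDeriv, div_eq_div_iff (by simpa using x.denom_ne_zero) (by simpa using hq), ← map_mul,
    ← map_mul]
  congr 1
  linear_combination (x.denom * q) * hx' - (derivative x.denom * q + x.denom * derivative q) * hx

lemma derivative_pow_mul_self (r : K[X]) (n : ℕ) :
    derivative (r ^ n) * r = n * derivative r * r ^ n := by
  cases n with
  | zero => simp
  | succ n =>
    rw [derivative_pow_succ, ← C_eq_natCast]
    simp only [map_add, map_natCast, map_one, Nat.cast_succ]
    ring

lemma nabla_fracVec {r : K[X]} (hr : r ≠ 0) (b : Matrix (Fin m) (Fin m) K[X]) (n : ℕ)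
    (g : Fin m → K[X]) :
    nabla m r b (fracVec r n g) = fracVec r (n + 1) (nablaNumerator r b n g) := by
  have hr' : algebraMap K[X] (RatFunc K) r ≠ 0 := by simpa using hr
  ext i
  have hderiv : ratDeriv (fracVec r n g i) =
      algebraMap K[X] (RatFunc K) (derivative (g i) * r - n * derivative r * g i) /
        algebraMap K[X] (RatFunc K) r ^ (n + 1) := by
    rw [fracVec_apply, ← map_pow, ratDeriv_algebraMap_div _ _ (pow_ne_zero n hr),
      div_eq_div_iff (by simp [hr]) (by simp [hr]), ← map_pow, ← map_mul, ← map_mul]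
    congr 1
    linear_combination (-(g i * r ^ n)) * derivative_pow_mul_self r n
  have hmul : ((of fun i j => algebraMap K[X] (RatFunc K) (b i j) /
      algebraMap K[X] (RatFunc K) r) *ᵥ fracVec r n g) i =
      algebraMap K[X] (RatFunc K) ((b *ᵥ g) i) / algebraMap K[X] (RatFunc K) r ^ (n + 1) := by
    simp only [mulVec, dotProduct, of_apply, fracVec_apply, map_sum, Finset.sum_div, map_mul]
    refine Finset.sum_congr rfl fun j _ => ?_
    rw [pow_succ]
    field_simp
  rw [nabla, hderiv, hmul, ← add_div, ← map_add, fracVec_apply, nablaNumerator_apply]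
  rfl

end Connection

section ExactForms

variable {K : Type*} [Field K] {m : ℕ}

noncomputable def exactForms (r : K[X]) (b : Matrix (Fin m) (Fin m) K[X]) :
    Submodule K (Fin m → RatFunc K) :=
  Submodule.span K (Set.range fun p : ℕ × (Fin m → K[X]) => nabla m r b (fracVec r p.1 p.2))

variable {r : K[X]} (hr : r ≠ 0) (b : Matrix (Fin m) (Fin m) K[X])
include hr

lemma fracVec_succ_nablaNumerator_mem_exactForms (n : ℕ) (g : Fin m → K[X]) :
    fracVec r (n + 1) (nablaNumerator r b n g) ∈ exactForms r b :=
  nabla_fracVec hr b n g ▸ Submodule.subset_span ⟨(n, g), rfl⟩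

lemma nabla_fracVec_add (n : ℕ) (g g' : Fin m → K[X]) :
    nabla m r b (fracVec r n (g + g')) =
      nabla m r b (fracVec r n g) + nabla m r b (fracVec r n g') := by
  rw [nabla_fracVec hr, nabla_fracVec hr, nabla_fracVec hr, map_add, map_add]

lemma exists_nabla_fracVec_eq_of_mem_exactForms {w : Fin m → RatFunc K}
    (hw : w ∈ exactForms r b) : ∃ n g, nabla m r b (fracVec r n g) = w := by
  induction hw using Submodule.span_induction with
  | mem w hw => obtain ⟨⟨n, g⟩, rfl⟩ := hw; exact ⟨n, g, rfl⟩
  | zero => exact ⟨0, 0, by rw [nabla_fracVec hr, map_zero, map_zero]⟩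
  | add w w' _ _ hw hw' =>
    obtain ⟨n, g, rfl⟩ := hw
    obtain ⟨n', g', rfl⟩ := hw'
    refine ⟨n + n', r ^ n' • g + r ^ n • g', ?_⟩
    rw [nabla_fracVec_add hr, fracVec_add_pow_smul hr, add_comm n n', fracVec_add_pow_smul hr]
  | smul c w _ hw =>
    obtain ⟨n, g, rfl⟩ := hw
    exact ⟨n, c • g, by rw [nabla_fracVec hr, nabla_fracVec hr, map_smul, map_smul]⟩

end ExactForms

section PoleReduction

variable {K : Type*} [Field K] {m : ℕ}

lemma exists_eq_nablaNumerator_add_smul {r : K[X]} {b : Matrix (Fin m) (Fin m) K[X]} {n : ℕ}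
    (hcop : IsCoprime (b - (n * derivative r) • 1).det r) (f : Fin m → K[X]) :
    ∃ g h, f = nablaNumerator r b n g + r • h := by
  obtain ⟨u, w, huw⟩ := hcop
  set D := b - (n * derivative r) • 1
  -- `g := u adj(D) f` solves `D g = u det(D) f = f - w r f`.
  set g := u • D.adjugate *ᵥ f
  refine ⟨g, w • f - fun i => derivative (g i), ?_⟩
  have hD : D *ᵥ g = (u * D.det) • f := by
    rw [mulVec_smul, mulVec_mulVec, mul_adjugate, smul_mulVec, one_mulVec, smul_smul]
  ext1 i
  have hDi := congrFun hD i
  simp only [nablaNumerator, LinearMap.coe_mk, AddHom.coe_mk, Pi.add_apply, Pi.smul_apply,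
    Pi.sub_apply, smul_eq_mul] at hDi ⊢
  linear_combination -(f i) * huw - hDi

lemma exists_fracVec_sub_fracVec_mem_exactForms {ρ : ℕ} {r : K[X]} (hr : r ≠ 0)
    {b : Matrix (Fin m) (Fin m) K[X]}
    (hcop : ∀ n, ρ ≤ n → IsCoprime (b - (n * derivative r) • 1).det r) (n : ℕ)
    (f : Fin m → K[X]) : ∃ h, fracVec r n f - fracVec r ρ h ∈ exactForms r b := by
  induction n generalizing f with
  | zero =>
    refine ⟨r ^ ρ • f, ?_⟩
    rw [← fracVec_add_pow_smul hr 0 ρ, zero_add, sub_self]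
    exact zero_mem _
  | succ n ih =>
    rcases le_or_gt (n + 1) ρ with hn | hn
    · refine ⟨r ^ (ρ - (n + 1)) • f, ?_⟩
      rw [← fracVec_add_pow_smul hr (n + 1) (ρ - (n + 1)), Nat.add_sub_cancel' hn, sub_self]
      exact zero_mem _
    obtain ⟨g, h₁, rfl⟩ := exists_eq_nablaNumerator_add_smul (hcop n (by omega)) f
    obtain ⟨h, hh⟩ := ih h₁
    refine ⟨h, ?_⟩
    have hshift := fracVec_add_pow_smul hr n 1 h₁
    rw [pow_one] at hshift
    rw [map_add, hshift, add_sub_assoc]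
    exact add_mem (fracVec_succ_nablaNumerator_mem_exactForms hr b n g) hh

end PoleReduction

section DegreeReduction

lemma natDegree_derivative_mul_le {R : Type*} [Semiring R] {p q : R[X]} {e d : ℕ}
    (hp : p.natDegree ≤ e) (hq : q.natDegree ≤ d + 1) :
    (derivative p * q).natDegree ≤ e + d := by
  cases e with
  | zero => rw [eq_C_of_natDegree_le_zero hp]; simp
  | succ e =>
    have hp' : (derivative p).natDegree ≤ e := (natDegree_derivative_le p).trans (by omega)
    exact (natDegree_mul_le_of_le hp' hq).trans (by omega)

lemma coeff_derivative_mul {R : Type*} [CommSemiring R] {p q : R[X]} {e d : ℕ}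
    (hp : p.natDegree ≤ e) (hq : q.natDegree ≤ d + 1) :
    (derivative p * q).coeff (e + d) = e * p.coeff e * q.coeff (d + 1) := by
  cases e with
  | zero => rw [eq_C_of_natDegree_le_zero hp]; simp
  | succ e =>
    have hp' : (derivative p).natDegree ≤ e := (natDegree_derivative_le p).trans (by omega)
    rw [show e + 1 + d = e + (d + 1) by omega, coeff_mul_add_eq_of_natDegree_le hp' hq,
      coeff_derivative]
    push_cast
    ring

variable {K : Type*} [Field K] {m : ℕ}

/-- Singular exactly when `e - n (d + 1)` is a local exponent at infinity, i.e. an eigenvalue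
of `-b_d` (here `deg r = d + 1`). -/
def leadingMatrix (b : Matrix (Fin m) (Fin m) K[X]) (d n e : ℕ) : Matrix (Fin m) (Fin m) K :=
  ((e : K) - n * (d + 1)) • 1 + b.map (coeff · d)

lemma natDegree_natCast_mul_derivative_le {r : K[X]} {d : ℕ} (hrd : r.natDegree = d + 1)
    (n : ℕ) : ((n : K[X]) * derivative r).natDegree ≤ d := by
  have := natDegree_derivative_le r
  exact natDegree_mul_le.trans (by simp only [natDegree_natCast]; omega)

variable {r : K[X]} {b : Matrix (Fin m) (Fin m) K[X]} {d : ℕ} (hrd : r.natDegree = d + 1)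
  (hb : ∀ i j, (b i j).natDegree ≤ d)
include hrd hb

lemma natDegree_nablaNumerator_le (n : ℕ) {e : ℕ} {g : Fin m → K[X]}
    (hg : ∀ j, (g j).natDegree ≤ e) (i : Fin m) :
    (nablaNumerator r b n g i).natDegree ≤ e + d := by
  have h₁ := natDegree_derivative_mul_le (hg i) hrd.le
  have h₂ := natDegree_mul_le_of_le (natDegree_natCast_mul_derivative_le hrd n) (hg i)
  rw [nablaNumerator_apply]
  exact natDegree_add_le_of_degree_le ((natDegree_sub_le_of_le h₁ h₂).trans (by omega))
    (natDegree_sum_le_of_forall_le _ _ fun j _ =>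
      (natDegree_mul_le_of_le (hb i j) (hg j)).trans (by omega))

lemma coeff_nablaNumerator (hr : r.Monic) (n : ℕ) {e : ℕ} {g : Fin m → K[X]}
    (hg : ∀ j, (g j).natDegree ≤ e) (i : Fin m) :
    (nablaNumerator r b n g i).coeff (e + d) =
      (leadingMatrix b d n e *ᵥ fun j => (g j).coeff e) i := by
  have hr1 : r.coeff (d + 1) = 1 := hrd ▸ hr.coeff_natDegree
  rw [nablaNumerator_apply, coeff_add, coeff_sub, coeff_derivative_mul (hg i) hrd.le,
    add_comm e d, coeff_mul_add_eq_of_natDegree_le (natDegree_natCast_mul_derivative_le hrd n)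
      (hg i), finsetSum_coeff, leadingMatrix, add_mulVec, smul_mulVec, one_mulVec]
  simp only [coeff_mul_add_eq_of_natDegree_le (hb i _) (hg _), coeff_natCast_mul,
    coeff_derivative, hr1, Pi.add_apply, Pi.smul_apply, smul_eq_mul, mulVec, dotProduct,
    map_apply]
  ring

lemma exists_natDegree_sub_nablaNumerator_le (hr : r.Monic) {n e : ℕ}
    (hM : (leadingMatrix b d n (e + 1)).det ≠ 0) {f : Fin m → K[X]}
    (hf : ∀ i, (f i).natDegree ≤ e + 1 + d) :
    ∃ g, ∀ i, ((f - nablaNumerator r b n g) i).natDegree ≤ e + d := by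
  set c := (leadingMatrix b d n (e + 1))⁻¹ *ᵥ fun i => (f i).coeff (e + 1 + d)
  have hg : ∀ j, (C (c j) * X ^ (e + 1)).natDegree ≤ e + 1 :=
    fun j => natDegree_C_mul_X_pow_le _ _
  refine ⟨fun j => C (c j) * X ^ (e + 1), fun i => ?_⟩
  have hlead : (nablaNumerator r b n (fun j => C (c j) * X ^ (e + 1)) i).coeff (e + 1 + d) =
      (f i).coeff (e + 1 + d) := by
    simp only [coeff_nablaNumerator hrd hb hr n hg, coeff_C_mul_X_pow, if_true]
    rw [mulVec_mulVec, mul_nonsing_inv _ (isUnit_iff_ne_zero.mpr hM), one_mulVec]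
  rw [natDegree_le_iff_coeff_eq_zero]
  intro N hN
  rcases (show N = e + 1 + d ∨ e + 1 + d < N by omega) with rfl | hN
  · rw [Pi.sub_apply, coeff_sub, hlead, sub_self]
  · rw [Pi.sub_apply, coeff_sub, coeff_eq_zero_of_natDegree_lt ((hf i).trans_lt hN),
      coeff_eq_zero_of_natDegree_lt ((natDegree_nablaNumerator_le hrd hb n hg i).trans_lt hN),
      sub_self]

lemma exists_natDegree_sub_nablaNumerator_le_of_det_ne_zero (hr : r.Monic) {n e₀ : ℕ}
    (hM : ∀ e, e₀ < e → (leadingMatrix b d n e).det ≠ 0) (f : Fin m → K[X]) :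
    ∃ g, ∀ i, ((f - nablaNumerator r b n g) i).natDegree ≤ e₀ + d := by
  suffices key : ∀ t (f : Fin m → K[X]), (∀ i, (f i).natDegree ≤ e₀ + t + d) →
      ∃ g, ∀ i, ((f - nablaNumerator r b n g) i).natDegree ≤ e₀ + d from
    key (Finset.univ.sup fun i => (f i).natDegree) f fun i =>
      (Finset.le_sup (f := fun i => (f i).natDegree) (Finset.mem_univ i)).trans (by omega)
  intro t
  induction t with
  | zero => exact fun f hf => ⟨0, by simpa using hf⟩
  | succ t ih =>
    intro f hf
    obtain ⟨g₁, hg₁⟩ := exists_natDegree_sub_nablaNumerator_le hrd hb hr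
      (hM (e₀ + t + 1) (by omega)) fun i => (hf i).trans (by omega)
    obtain ⟨g₂, hg₂⟩ := ih _ hg₁
    exact ⟨g₁ + g₂, by simpa [sub_sub] using hg₂⟩

end DegreeReduction

section LocalExponents

variable {K L : Type*} [Field K] [Field L] [Algebra K L] {m : ℕ}

lemma isCoprime_det_sub_smul_one [IsAlgClosed L] {r : K[X]} (hsep : r.Separable)
    {b : Matrix (Fin m) (Fin m) K[X]} {n : ℕ}
    (hn : ∀ γ : L, aeval γ r = 0 →
      ((n : L) • (1 : Matrix (Fin m) (Fin m) L) -
        (aeval γ (derivative r))⁻¹ • b.map (aeval γ)).det ≠ 0) :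
    IsCoprime (b - (n * derivative r) • 1).det r := by
  refine (isCoprime_iff_aeval_ne_zero_of_isAlgClosed K L _ _).mpr fun γ => ?_
  by_cases hγ : aeval γ r = 0
  · left
    have hc : aeval γ (derivative r) ≠ 0 := hsep.aeval_derivative_ne_zero hγ
    have hmap : (aeval γ).toRingHom.mapMatrix (b - (n * derivative r) • 1) =
        (-aeval γ (derivative r)) •
          ((n : L) • 1 - (aeval γ (derivative r))⁻¹ • b.map (aeval γ)) := by
      ext i j
      simp only [RingHom.mapMatrix_apply, map_apply, Matrix.sub_apply, Matrix.smul_apply,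
        one_apply, smul_eq_mul, AlgHom.toRingHom_eq_coe, RingHom.coe_coe, map_sub, map_mul,
        map_natCast]
      split_ifs <;> field_simp <;> simp only [map_one, map_zero] <;> ring
    rw [AlgHom.toRingHom_eq_coe] at hmap
    rw [← AlgHom.coe_toRingHom, RingHom.map_det, hmap, det_smul]
    exact mul_ne_zero (pow_ne_zero _ (neg_ne_zero.mpr hc)) (hn γ hγ)
  · exact Or.inr hγ

lemma det_leadingMatrix_ne_zero {b : Matrix (Fin m) (Fin m) K[X]} {d n e : ℕ}
    (h : ((((e : ℤ) - n * (d + 1) : ℤ) : L) • (1 : Matrix (Fin m) (Fin m) L) +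
      b.map (fun q => algebraMap K L (q.coeff d))).det ≠ 0) :
    (leadingMatrix b d n e).det ≠ 0 := by
  intro h0
  apply h
  have hmap : (algebraMap K L).mapMatrix (leadingMatrix b d n e) =
      (((e : ℤ) - n * (d + 1) : ℤ) : L) • 1 +
        b.map (fun q => algebraMap K L (q.coeff d)) := by
    ext i j
    simp [leadingMatrix, Matrix.one_apply, apply_ite (algebraMap K L)]
  rw [← hmap, ← RingHom.map_det, h0, map_zero]

end LocalExponents

lemma exists_sub_nabla_eq_fracVec {K : Type*} [Field K] {m d ρ e₀ : ℕ} (hρ : 1 ≤ ρ)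
    {r : K[X]} (hr : r.Monic) (hrd : r.natDegree = d + 1) {b : Matrix (Fin m) (Fin m) K[X]}
    (hb : ∀ i j, (b i j).natDegree ≤ d)
    (hcop : ∀ n, ρ ≤ n → IsCoprime (b - (n * derivative r) • 1).det r)
    (hM : ∀ e, e₀ < e → (leadingMatrix b d (ρ - 1) e).det ≠ 0) {u : Fin m → RatFunc K}
    (hu : ∀ i, inA r (u i)) :
    ∃ n g h, (∀ i, (h i).natDegree ≤ e₀ + d) ∧
      u - nabla m r b (fracVec r n g) = fracVec r ρ h := by
  obtain ⟨n, f, rfl⟩ := exists_fracVec_eq hr.ne_zero hu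
  obtain ⟨h, hh⟩ := exists_fracVec_sub_fracVec_mem_exactForms hr.ne_zero hcop n f
  obtain ⟨g, hg⟩ := exists_natDegree_sub_nablaNumerator_le_of_det_ne_zero hrd hb hr hM h
  have hexact : fracVec r n f - fracVec r ρ (h - nablaNumerator r b (ρ - 1) g) ∈
      exactForms r b := by
    have hΦ := fracVec_succ_nablaNumerator_mem_exactForms hr.ne_zero b (ρ - 1) g
    rw [Nat.sub_add_cancel hρ] at hΦ
    rw [map_sub, ← sub_add]
    exact add_mem hh hΦ
  obtain ⟨M, g', hg'⟩ := exists_nabla_fracVec_eq_of_mem_exactForms hr.ne_zero b hexact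
  exact ⟨M, g', _, hg, by rw [hg', sub_sub_cancel]⟩

/-- Theorem `Thm-BasisdR`: under the hypotheses of the reduction theorem
(`∇ = d/dΓ + b/r` with `r` monic squarefree of degree `d`, `deg b ≤ d-1`, and `ρ`
exceeding all integer local exponents at the roots of `r` and at infinity), the cokernel
`E = coker(∇ : A^m → A^m dΓ)`, `A = K[Γ,1/r]`, is a finite-dimensional `K`-vector space:
there is a finite set of forms with entries in `A` whose images span the cokernel. -/
theorem stmt4 {K : Type*} [Field K] [CharZero K] (m d ρ : ℕ) (hd : 1 ≤ d) (hρ : 1 ≤ ρ)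
    (r : Polynomial K) (hmonic : r.Monic) (hsf : Squarefree r) (hdeg : r.natDegree = d)
    (b : Matrix (Fin m) (Fin m) (Polynomial K)) (hb : ∀ i j, (b i j).degree ≤ (d - 1 : ℕ))
    (hfin : ∀ (n : ℤ) (γ : AlgebraicClosure K), aeval γ r = 0 →
      ((n : AlgebraicClosure K) • (1 : Matrix (Fin m) (Fin m) (AlgebraicClosure K))
        - (aeval γ (derivative r))⁻¹ • b.map (fun q => aeval γ q)).det = 0 → n < (ρ : ℤ))
    (hinf : ∀ n : ℤ,
      ((n : AlgebraicClosure K) • (1 : Matrix (Fin m) (Fin m) (AlgebraicClosure K))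
        + b.map (fun q => algebraMap K (AlgebraicClosure K) (q.coeff (d - 1)))).det = 0 →
      n < (ρ : ℤ)) :
    ∃ s : Finset (Fin m → RatFunc K), (∀ w ∈ s, ∀ i, inA r (w i)) ∧
      ∀ u : Fin m → RatFunc K, (∀ i, inA r (u i)) →
        ∃ v : Fin m → RatFunc K, (∀ i, inA r (v i)) ∧
          u - nabla m r b v ∈ Submodule.span K (s : Set (Fin m → RatFunc K)) := by
  classical
  obtain ⟨d, rfl⟩ : ∃ d', d = d' + 1 := ⟨d - 1, by omega⟩
  simp only [Nat.add_sub_cancel] at hb hinf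
  have hcop : ∀ n, ρ ≤ n → IsCoprime (b - (n * derivative r) • 1).det r := fun n hn =>
    isCoprime_det_sub_smul_one (PerfectField.separable_iff_squarefree.mpr hsf) fun γ hγ hdet =>
      (hfin n γ hγ (by exact_mod_cast hdet)).not_ge (by exact_mod_cast hn)
  -- Beyond this bound `e - (ρ - 1) (d + 1) ≥ ρ`, so `hinf` applies.
  have hM : ∀ e, (ρ - 1) * (d + 1) + (ρ - 1) < e → (leadingMatrix b d (ρ - 1) e).det ≠ 0 :=
    fun e he => det_leadingMatrix_ne_zero fun hdet =>
      (hinf _ hdet).not_ge (by zify [hρ] at he ⊢; linarith)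
  refine ⟨(Finset.range ((ρ - 1) * (d + 1) + (ρ - 1) + d + 1) ×ˢ Finset.univ).image
    fun p : ℕ × Fin m => fracVec r ρ (Pi.single p.2 (X ^ p.1)), ?_, fun u hu => ?_⟩
  · simp only [Finset.mem_image]
    rintro _ ⟨p, -, rfl⟩ i
    exact ⟨_, ρ, rfl⟩
  obtain ⟨n, g, h, hh, heq⟩ := exists_sub_nabla_eq_fracVec hρ hmonic hdeg
    (fun i j => natDegree_le_iff_degree_le.mpr (hb i j)) hcop hM hu
  refine ⟨fracVec r n g, fun i => ⟨g i, n, rfl⟩, ?_⟩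
  rw [heq, Finset.coe_image]
  exact fracVec_mem_span_single_X_pow r ρ _ fun i => Nat.lt_succ_of_le (hh i)
end

section
/- Let p be a prime, Δ ≥ 0 and N ≥ 1 integers with gcd(p,N) = 1, and let δ ∈ ℤ_p satisfy δ = ν/N with ν ∈ ℤ, |ν| ≤ 2NΔ. Define θ(δ, s) := ∏_{k=1}^s (δ + k). Then for every positive integer s, ord_p(θ(δ,s)) ≤ s/(p-1) + log_p(1+s) + log_p(2Δ+1) + log_p(N). -/
/-!
Clearing the denominator, `N (δ + k) = ν + N k =: a_k` is an integer with `|a_k| ≤ M :=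
N (2Δ + 1) (1 + s)` and the same `p`-adic valuation as `δ + k`. Since `p ∤ N`, the indices
`k ≤ s` with `p ^ j ∣ a_k` all lie in one residue class mod `p ^ j`, so there are at most
`s / p ^ j + 1` of them, and none once `p ^ j > M`. Counting `∑ₖ v_p(a_k) = ∑ⱼ #{k : p ^ j ∣ a_k}`
gives at most `∑_{j ≤ log_p M} (s / p ^ j + 1) ≤ s / (p - 1) + log_p M`.
-/

open Finset

theorem Padic.valuation_prod {p : ℕ} [Fact p.Prime] {ι : Type*} (t : Finset ι) (f : ι → ℚ_[p])
    (hf : ∀ i ∈ t, f i ≠ 0) :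
    (∏ i ∈ t, f i).valuation = ∑ i ∈ t, (f i).valuation := by
  classical
  induction t using Finset.induction_on with
  | empty => simp
  | insert a t ha ih =>
    have hf' : ∀ i ∈ t, f i ≠ 0 := fun i hi => hf i (mem_insert_of_mem hi)
    rw [prod_insert ha, sum_insert ha, Padic.valuation_mul (hf a (mem_insert_self a t))
      (prod_ne_zero_iff.mpr hf'), ih hf']

theorem Padic.valuation_eq_padicValInt_of_natCast_mul_eq {p : ℕ} [Fact p.Prime] {N : ℕ}
    (hN : ¬ p ∣ N) {x : ℚ_[p]} (hx : x ≠ 0) {a : ℤ} (h : (N : ℚ_[p]) * x = a) :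
    x.valuation = padicValInt p a := by
  have hN0 : (N : ℚ_[p]) ≠ 0 := Nat.cast_ne_zero.mpr (by rintro rfl; exact hN (dvd_zero p))
  rw [← Padic.valuation_intCast, ← h, Padic.valuation_mul hN0 hx, Padic.valuation_natCast,
    padicValNat.eq_zero_of_not_dvd hN, Nat.cast_zero, zero_add]

theorem padicValInt_le_card_filter_pow_dvd {p : ℕ} [hp : Fact p.Prime] {a : ℤ} {M : ℕ}
    (ha : a.natAbs ≤ M) :
    padicValInt p a ≤ #{j ∈ Icc 1 (Nat.log p M) | (p : ℤ) ^ j ∣ a} := by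
  rcases eq_or_ne a 0 with rfl | ha0
  · simp
  have hle : p ^ padicValInt p a ≤ M :=
    (Nat.le_of_dvd (Int.natAbs_pos.mpr ha0) pow_padicValNat_dvd).trans ha
  calc padicValInt p a = #(Icc 1 (padicValInt p a)) := by simp
    _ ≤ _ := card_le_card fun j hj => by
      rw [mem_Icc] at hj
      rw [mem_filter, mem_Icc, padicValInt_dvd_iff]
      exact ⟨⟨hj.1, hj.2.trans (Nat.le_log_of_pow_le hp.out.one_lt hle)⟩, Or.inr hj.2⟩

theorem card_le_div_add_one_of_modEq {S : Finset ℕ} {m s : ℕ} (hS : ∀ k ∈ S, k ≤ s)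
    (hmod : ∀ k₁ ∈ S, ∀ k₂ ∈ S, k₁ ≡ k₂ [MOD m]) : #S ≤ s / m + 1 := by
  calc #S ≤ #(range (s / m + 1)) := card_le_card_of_injOn (· / m)
        (fun k hk => mem_range_succ_iff.mpr (Nat.div_le_div_right (hS k hk)))
        (fun k₁ h₁ k₂ h₂ hdiv => by
          rw [← Nat.div_add_mod k₁ m, ← Nat.div_add_mod k₂ m]
          simp only at hdiv
          rw [hdiv, hmod k₁ h₁ k₂ h₂])
    _ = s / m + 1 := card_range _

theorem Nat.ModEq.of_dvd_add_mul {m N : ℕ} (hco : m.Coprime N) {ν : ℤ} {k₁ k₂ : ℕ}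
    (h₁ : (m : ℤ) ∣ ν + N * k₁) (h₂ : (m : ℤ) ∣ ν + N * k₂) : k₁ ≡ k₂ [MOD m] := by
  have hdiff : (m : ℤ) ∣ N * ((k₂ : ℤ) - k₁) := by
    have := _root_.dvd_sub h₂ h₁
    rwa [add_sub_add_left_eq_sub, ← mul_sub] at this
  exact Nat.modEq_iff_dvd.mpr ((Nat.isCoprime_iff_coprime.mpr hco).dvd_of_dvd_mul_left hdiff)

theorem sum_Icc_div_pow_le {x : ℝ} (hx : 1 < x) {c : ℝ} (hc : 0 ≤ c) (J : ℕ) :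
    ∑ j ∈ Icc 1 J, c / x ^ j ≤ c / (x - 1) := by
  have hx0 : 0 < x := zero_lt_one.trans hx
  have hgeom : ∑ j ∈ Ico 1 (J + 1), x⁻¹ ^ j ≤ (x - 1)⁻¹ := by
    refine (geom_sum_Ico_le_of_lt_one (by positivity) (inv_lt_one_of_one_lt₀ hx)).trans_eq ?_
    field_simp
  calc ∑ j ∈ Icc 1 J, c / x ^ j = c * ∑ j ∈ Ico 1 (J + 1), x⁻¹ ^ j := by
        rw [Ico_add_one_right_eq_Icc, mul_sum]
        simp only [div_eq_mul_inv, inv_pow]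
    _ ≤ c / (x - 1) := by
      rw [div_eq_mul_inv]; exact mul_le_mul_of_nonneg_left hgeom hc

theorem sum_padicValInt_le_of_modEq {p : ℕ} [hp : Fact p.Prime] {a : ℕ → ℤ}
    (ha : ∀ j k₁ k₂, (p : ℤ) ^ j ∣ a k₁ → (p : ℤ) ^ j ∣ a k₂ → k₁ ≡ k₂ [MOD p ^ j])
    {s M : ℕ} (hM : ∀ k ∈ Icc 1 s, (a k).natAbs ≤ M) :
    ∑ k ∈ Icc 1 s, (padicValInt p (a k) : ℝ) ≤ s / (p - 1) + Nat.log p M := by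
  set J := Nat.log p M
  have hswap : ∑ k ∈ Icc 1 s, padicValInt p (a k) ≤
      ∑ j ∈ Icc 1 J, #{k ∈ Icc 1 s | (p : ℤ) ^ j ∣ a k} :=
    calc _ ≤ ∑ k ∈ Icc 1 s, #{j ∈ Icc 1 J | (p : ℤ) ^ j ∣ a k} :=
          sum_le_sum fun k hk => padicValInt_le_card_filter_pow_dvd (hM k hk)
      _ = _ := by simp only [card_filter]; exact sum_comm
  have hcount (j : ℕ) : (#{k ∈ Icc 1 s | (p : ℤ) ^ j ∣ a k} : ℝ) ≤ s / p ^ j + 1 := by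
    have hcard : #{k ∈ Icc 1 s | (p : ℤ) ^ j ∣ a k} ≤ s / p ^ j + 1 :=
      card_le_div_add_one_of_modEq (fun _ hk => (mem_Icc.mp (mem_filter.mp hk).1).2)
        fun k₁ h₁ k₂ h₂ => ha j k₁ k₂ (mem_filter.mp h₁).2 (mem_filter.mp h₂).2
    calc _ ≤ ((s / p ^ j : ℕ) : ℝ) + 1 := by exact_mod_cast hcard
      _ ≤ s / p ^ j + 1 := by grw [Nat.cast_div_le, Nat.cast_pow]
  calc ∑ k ∈ Icc 1 s, (padicValInt p (a k) : ℝ)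
      ≤ ∑ j ∈ Icc 1 J, (#{k ∈ Icc 1 s | (p : ℤ) ^ j ∣ a k} : ℝ) := by exact_mod_cast hswap
    _ ≤ ∑ j ∈ Icc 1 J, ((s : ℝ) / p ^ j + 1) := sum_le_sum fun j _ => hcount j
    _ = ∑ j ∈ Icc 1 J, (s : ℝ) / p ^ j + J := by simp [sum_add_distrib]
    _ ≤ s / (p - 1) + J := by
      grw [sum_Icc_div_pow_le (by exact_mod_cast hp.out.one_lt) s.cast_nonneg J]

theorem natAbs_add_mul_le {ν : ℤ} {N Δ s k : ℕ} (hν : |ν| ≤ (2 * N * Δ : ℕ)) (hk : k ≤ s) :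
    (ν + N * (k : ℤ)).natAbs ≤ N * (2 * Δ + 1) * (1 + s) := by
  have hNk : (0 : ℤ) ≤ N * k := by positivity
  have hNΔs : (0 : ℤ) ≤ N * Δ * s := by positivity
  zify at hν hk ⊢
  calc |ν + N * (k : ℤ)| ≤ |ν| + N * k := by grw [abs_add_le, abs_of_nonneg hNk]
    _ ≤ N * (2 * Δ + 1) * (1 + s) := by
      nlinarith [mul_le_mul_of_nonneg_left hk (Int.natCast_nonneg N)]

theorem stmt6_general (p : ℕ) [Fact p.Prime] (δ : ℚ_[p])
    (ν : ℤ) (N Δ : ℕ) (hco : Nat.Coprime p N)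
    (hνδ : (N : ℚ_[p]) * δ = (ν : ℚ_[p])) (hν : |ν| ≤ (2 * N * Δ : ℕ))
    (s : ℕ) (hne : ∀ k ∈ Finset.Icc 1 s, δ + (k : ℚ_[p]) ≠ 0) :
    (((∏ k ∈ Finset.Icc 1 s, (δ + (k : ℚ_[p]))).valuation : ℝ)) ≤
      (s : ℝ) / (p - 1) + Real.logb p (1 + s) + Real.logb p (2 * Δ + 1) + Real.logb p N := by
  have hpN : ¬ p ∣ N := (Nat.Prime.coprime_iff_not_dvd Fact.out).mp hco
  have hN : N ≠ 0 := by rintro rfl; exact hpN (dvd_zero p)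
  have hval : ∀ k ∈ Icc 1 s, (δ + k).valuation = padicValInt p (ν + N * (k : ℤ)) :=
    fun k hk => Padic.valuation_eq_padicValInt_of_natCast_mul_eq hpN (hne k hk)
      (by push_cast; rw [mul_add, hνδ])
  rw [Padic.valuation_prod _ _ hne, sum_congr rfl hval]
  push_cast
  calc _ ≤ (s : ℝ) / (p - 1) + Nat.log p (N * (2 * Δ + 1) * (1 + s)) :=
        sum_padicValInt_le_of_modEq
          (fun j _ _ h₁ h₂ => Nat.ModEq.of_dvd_add_mul (hco.pow_left j)
            (by exact_mod_cast h₁) (by exact_mod_cast h₂))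
          fun k hk => natAbs_add_mul_le hν (mem_Icc.mp hk).2
    _ ≤ (s : ℝ) / (p - 1) + Real.logb p (N * (2 * Δ + 1) * (1 + s) : ℕ) := by
        grw [Real.natLog_le_logb]
    _ = _ := by
      push_cast
      rw [Real.logb_mul (by positivity) (by positivity),
        Real.logb_mul (by positivity) (by positivity)]
      ring

/-- effective Clark bound: let `p` be a prime, `Δ ≥ 0` and `N ≥ 1` integers
with `gcd(p,N) = 1`, and `δ ∈ ℤ_p` with `δ = ν/N`, `ν ∈ ℤ`, `|ν| ≤ 2NΔ`. With
`θ(δ,s) = ∏_{k=1}^s (δ + k)` (assumed nonzero), for every positive integer `s`,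
`ord_p(θ(δ,s)) ≤ s/(p-1) + log_p(1+s) + log_p(2Δ+1) + log_p N`. -/
theorem stmt6 (p : ℕ) [Fact p.Prime] (δ : ℚ_[p]) (hδint : ‖δ‖ ≤ 1)
    (ν : ℤ) (N Δ : ℕ) (hN : 1 ≤ N) (hco : Nat.Coprime p N)
    (hνδ : (N : ℚ_[p]) * δ = (ν : ℚ_[p])) (hν : |ν| ≤ (2 * N * Δ : ℕ))
    (s : ℕ) (hs : 0 < s) (hne : ∀ k ∈ Finset.Icc 1 s, δ + (k : ℚ_[p]) ≠ 0) :
    (((∏ k ∈ Finset.Icc 1 s, (δ + (k : ℚ_[p]))).valuation : ℝ)) ≤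
      (s : ℝ) / (p - 1) + Real.logb p (1 + s) + Real.logb p (2 * Δ + 1) + Real.logb p N :=
  stmt6_general p δ ν N Δ hco hνδ hν s hne
end

section
/- Let p be a prime and let λ_1, …, λ_m ∈ ℤ_p be p-adic integers with λ_i = μ_i/N, μ_i ∈ ℤ, |λ_i| ≤ Δ (for integers N ≥ 1 coprime to p and Δ ≥ 0). Let ℓ ≥ 1 be an integer with ℓ ≥ Δ + 1 (so ℓ exceeds |λ_i|). Then for every integer j with 0 ≤ j ≤ ℓ - Δ - 1, ord_p(∏_{i=1}^m (λ_i - ℓ + j)) ≤ m·(log_p(ℓ - Δ - 1 + 1) + log_p(N) + log_p(2Δ+2)), where log_p(0) is interpreted as 0. -/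
/-!
Clearing the denominator `N`, which is a `p`-adic unit, turns each factor `λ_i - ℓ + j` into the
integer `μ_i - N (ℓ - j)`. Since `ℓ - j > Δ ≥ |λ_i|`, these integers are nonzero, and their
absolute values are at most `(ℓ - Δ) N (2Δ + 2)`. The `p`-adic valuation of a nonzero integer is
at most `log_p` of its absolute value, and `log_p` turns the product into a sum.
-/

open Finset

lemma padicValInt_le_logb_abs (p : ℕ) (z : ℤ) : (padicValInt p z : ℝ) ≤ Real.logb p |z| :=
  calc (padicValInt p z : ℝ) = padicValNat p z.natAbs := rfl
    _ ≤ Nat.log p z.natAbs := by exact_mod_cast padicValNat_le_nat_log _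
    _ ≤ Real.logb p z.natAbs := Real.natLog_le_logb _ _
    _ = Real.logb p |z| := by rw [Nat.cast_natAbs, Int.cast_abs]

lemma Real.logb_abs_prod_le_card_mul {ι : Type*} (s : Finset ι) {b K : ℝ} (hb : 1 < b)
    {f : ι → ℝ} (hf : ∀ i ∈ s, f i ≠ 0) (hK : ∀ i ∈ s, |f i| ≤ K) :
    Real.logb b |∏ i ∈ s, f i| ≤ #s * Real.logb b K := by
  rw [Real.logb_abs, Real.logb_prod _ _ hf, ← nsmul_eq_mul]
  refine sum_le_card_nsmul s _ _ fun i hi => ?_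
  rw [← Real.logb_abs]
  exact Real.logb_le_logb_of_le hb (abs_pos.mpr (hf i hi)) (hK i hi)

namespace Padic

variable {p : ℕ} [Fact p.Prime]

lemma valuation_natCast_mul_of_not_dvd {n : ℕ} (hn : ¬ p ∣ n) {x : ℚ_[p]} (hx : x ≠ 0) :
    ((n : ℚ_[p]) * x).valuation = x.valuation := by
  have hn0 : (n : ℚ_[p]) ≠ 0 := Nat.cast_ne_zero.mpr fun h => hn (h ▸ dvd_zero p)
  rw [valuation_mul hn0 hx, valuation_natCast, padicValNat.eq_zero_of_not_dvd hn, Nat.cast_zero,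
    zero_add]

lemma valuation_eq_padicValInt_of_natCast_mul_eq_s7 {n : ℕ} (hn : ¬ p ∣ n) {x : ℚ_[p]} {z : ℤ}
    (h : (n : ℚ_[p]) * x = z) : x.valuation = padicValInt p z := by
  rcases eq_or_ne x 0 with rfl | hx
  · rw [mul_zero, eq_comm, Int.cast_eq_zero] at h
    simp [h]
  · rw [← valuation_natCast_mul_of_not_dvd hn hx, h, valuation_intCast]

lemma valuation_prod_le_card_mul_logb {ι : Type*} (s : Finset ι) {n : ℕ} (hn : ¬ p ∣ n)
    {y : ι → ℚ_[p]} {x : ι → ℤ} (hxy : ∀ i ∈ s, (n : ℚ_[p]) * y i = x i)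
    (hx : ∀ i ∈ s, x i ≠ 0) {K : ℝ} (hK : ∀ i ∈ s, |(x i : ℝ)| ≤ K) :
    ((∏ i ∈ s, y i).valuation : ℝ) ≤ #s * Real.logb p K := by
  have hprod : ((n ^ #s : ℕ) : ℚ_[p]) * ∏ i ∈ s, y i = ((∏ i ∈ s, x i : ℤ) : ℚ_[p]) := by
    rw [Int.cast_prod, ← prod_congr rfl hxy, prod_mul_distrib, prod_const, Nat.cast_pow]
  have hn_pow : ¬ p ∣ n ^ #s := fun h => hn ((Fact.out : p.Prime).dvd_of_dvd_pow h)
  rw [valuation_eq_padicValInt_of_natCast_mul_eq_s7 hn_pow hprod]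
  calc _ ≤ Real.logb p |((∏ i ∈ s, x i : ℤ) : ℝ)| := padicValInt_le_logb_abs p _
    _ ≤ #s * Real.logb p K := by
      rw [Int.cast_prod]
      exact Real.logb_abs_prod_le_card_mul s (by exact_mod_cast (Fact.out : p.Prime).one_lt)
        (fun i hi => Int.cast_ne_zero.mpr (hx i hi)) hK

end Padic

section

variable {μ N Δ s ℓ : ℤ}

lemma sub_mul_neg_of_abs_le (hN : 0 < N) (hμ : |μ| ≤ N * Δ) (hs : Δ < s) : μ - N * s < 0 := by
  nlinarith [le_abs_self μ]

lemma abs_sub_mul_le_of_abs_le (hN : 0 ≤ N) (hΔ : 0 ≤ Δ) (hμ : |μ| ≤ N * Δ) (hs : Δ < s)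
    (hsℓ : s ≤ ℓ) : |μ - N * s| ≤ (ℓ - Δ) * N * (2 * Δ + 2) := by
  have hNs : 0 ≤ N * s := mul_nonneg hN (by omega)
  calc |μ - N * s| ≤ |μ| + N * s := by simpa [abs_of_nonneg hNs] using abs_sub μ (N * s)
    _ ≤ N * (Δ + ℓ) := by nlinarith
    _ ≤ N * ((ℓ - Δ) * (2 * Δ + 2)) := mul_le_mul_of_nonneg_left (by nlinarith) hN
    _ = (ℓ - Δ) * N * (2 * Δ + 2) := by ring

end

theorem stmt7_general (p : ℕ) [Fact p.Prime] (m : ℕ) (lam : Fin m → ℚ_[p]) (μ : Fin m → ℤ)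
    (N Δ : ℕ) (hco : Nat.Coprime p N)
    (hfrac : ∀ i, (N : ℚ_[p]) * lam i = (μ i : ℚ_[p]))
    (hbd : ∀ i, |μ i| ≤ (N * Δ : ℕ))
    (ℓ : ℕ) (j : ℕ) (hj : j + Δ + 1 ≤ ℓ) :
    (((∏ i, (lam i - (ℓ : ℚ_[p]) + (j : ℚ_[p]))).valuation : ℝ)) ≤
      (m : ℝ) * (Real.logb p ((ℓ : ℝ) - Δ - 1 + 1) + Real.logb p N
        + Real.logb p (2 * Δ + 2)) := by
  have hp : p.Prime := Fact.out
  have hN : 0 < N := Nat.pos_of_ne_zero <| by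
    rintro rfl
    exact hp.one_lt.ne' (Nat.coprime_zero_right p |>.mp hco)
  have hℓΔ : (0 : ℝ) < (ℓ : ℝ) - Δ - 1 + 1 := by
    have : (j : ℝ) + Δ + 1 ≤ ℓ := by exact_mod_cast hj
    linarith
  set x : Fin m → ℤ := fun i => μ i - N * ((ℓ : ℤ) - j)
  have hx : ∀ i ∈ univ, (N : ℚ_[p]) * (lam i - ℓ + j) = x i := fun i _ => by
    push_cast [x]
    linear_combination hfrac i
  have hx_ne : ∀ i ∈ univ, x i ≠ 0 := fun i _ =>
    (sub_mul_neg_of_abs_le (Δ := Δ) (by exact_mod_cast hN) (by exact_mod_cast hbd i)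
      (by omega)).ne
  have hx_le : ∀ i ∈ univ, |(x i : ℝ)| ≤ ((ℓ : ℝ) - Δ - 1 + 1) * N * (2 * Δ + 2) := fun i _ => by
    have : |x i| ≤ ((ℓ : ℤ) - Δ) * N * (2 * Δ + 2) := abs_sub_mul_le_of_abs_le (by positivity)
      (by positivity) (by exact_mod_cast hbd i) (by omega) (by omega)
    rw [sub_add_cancel]
    exact_mod_cast this
  calc _ ≤ (#univ : ℝ) * Real.logb p (((ℓ : ℝ) - Δ - 1 + 1) * N * (2 * Δ + 2)) :=
        Padic.valuation_prod_le_card_mul_logb univ (hp.coprime_iff_not_dvd.mp hco) hx hx_ne hx_le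
    _ = _ := by
      rw [card_univ, Fintype.card_fin, Real.logb_mul (by positivity) (by positivity),
        Real.logb_mul (by positivity) (by positivity)]

/-- let `p` be a prime and `λ_1, …, λ_m ∈ ℤ_p` with `λ_i = μ_i/N`,
`μ_i ∈ ℤ`, `|λ_i| ≤ Δ` (i.e. `|μ_i| ≤ NΔ`), for integers `N ≥ 1` coprime to `p` and
`Δ ≥ 0`. Let `ℓ ≥ Δ + 1`. Then for every integer `j` with `0 ≤ j ≤ ℓ - Δ - 1`,
`ord_p(∏_i (λ_i - ℓ + j)) ≤ m·(log_p(ℓ - Δ - 1 + 1) + log_p N + log_p (2Δ+2))`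
(with `log_p 0 = 0`, the convention built into `Real.logb`). -/
theorem stmt7 (p : ℕ) [Fact p.Prime] (m : ℕ) (lam : Fin m → ℚ_[p]) (μ : Fin m → ℤ)
    (N Δ : ℕ) (hN : 1 ≤ N) (hco : Nat.Coprime p N)
    (hint : ∀ i, ‖lam i‖ ≤ 1)
    (hfrac : ∀ i, (N : ℚ_[p]) * lam i = (μ i : ℚ_[p]))
    (hbd : ∀ i, |μ i| ≤ (N * Δ : ℕ))
    (ℓ : ℕ) (hℓ : Δ + 1 ≤ ℓ) (j : ℕ) (hj : j + Δ + 1 ≤ ℓ) :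
    (((∏ i, (lam i - (ℓ : ℚ_[p]) + (j : ℚ_[p]))).valuation : ℝ)) ≤
      (m : ℝ) * (Real.logb p ((ℓ : ℝ) - Δ - 1 + 1) + Real.logb p N
        + Real.logb p (2 * Δ + 2)) :=
  stmt7_general p m lam μ N Δ hco hfrac hbd ℓ j hj
end
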